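/- Fix constants $1 \le r \le p \le \beta \le \infty$ with $p \le q$ given by $1/p - 1/q = 1/\beta$ (all extended reals with the convention $1/\infty = 0$), and let $\omega$ be a weight on $\mathbb{R}^n$. Define, for a cube $Q$, the averaging operator $\mathbf{A}_{\beta, r, Q} f = \chi_Q \, |Q|^{1/\beta} \, |Q|^{-1/r} \|f\chi_Q\|_r$. If $\omega$ satisfies $\|\omega\chi_Q\|_q \, \|\omega^{-1}\chi_Q\|_{\frac{pr}{p-r}} \le C_0 \, |Q|^{\frac{\beta - r}{\beta r}}$ uniformly over cubes $Q$ (with the convention that the exponent $\frac{pr}{p-r}$ equals $\infty$ when $p = r$), then there is a constant $C$ such that $\|(\mathbf{A}_{\beta, r, Q} f)\,\omega\|_q \le C \, \|f\omega\|_p$ uniformly over cubes $Q$ and functions $f$. -/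

import Mathlib

open MeasureTheory Set ENNReal

/-- The axis-parallel cube in `ℝⁿ` with center `c` and side length `ℓ`. -/
def cube (n : ℕ) (c : Fin n → ℝ) (ℓ : ℝ) : Set (Fin n → ℝ) :=
  {x | ∀ i, |x i - c i| ≤ ℓ / 2}

/-!
Writing `f = ω⁻¹ · (f ω)` on `Q`, Hölder's inequality with `1/r = 1/p + 1/t` gives
`‖f χ_Q‖_r ≤ ‖ω⁻¹ χ_Q‖_t ‖f ω‖_p`. Multiplying by `‖ω χ_Q‖_q` and using the hypothesis on `ω`
leaves the factor `|Q|^{1/β} |Q|^{-1/r} |Q|^{1/u}`, which is `1` because `1/β + 1/u = 1/r`.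
-/

theorem cube_eq_Icc (n : ℕ) (c : Fin n → ℝ) (ℓ : ℝ) :
    cube n c ℓ = Icc (fun i => c i - ℓ / 2) (fun i => c i + ℓ / 2) := by
  ext x
  simp only [cube, mem_ofPred_eq, mem_Icc, Pi.le_def, abs_le]
  constructor
  · intro h
    exact ⟨fun i => by linarith [(h i).1], fun i => by linarith [(h i).2]⟩
  · intro h i
    exact ⟨by linarith [h.1 i], by linarith [h.2 i]⟩

theorem measurableSet_cube (n : ℕ) (c : Fin n → ℝ) (ℓ : ℝ) : MeasurableSet (cube n c ℓ) :=
  cube_eq_Icc n c ℓ ▸ measurableSet_Icc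

theorem volume_cube (n : ℕ) (c : Fin n → ℝ) (ℓ : ℝ) :
    volume (cube n c ℓ) = ENNReal.ofReal ℓ ^ n := by
  simp [cube_eq_Icc, Real.volume_Icc_pi]

theorem volume_cube_ne_zero (n : ℕ) (c : Fin n → ℝ) {ℓ : ℝ} (hℓ : 0 < ℓ) :
    volume (cube n c ℓ) ≠ 0 := by
  simp [volume_cube, hℓ]

theorem volume_cube_ne_top (n : ℕ) (c : Fin n → ℝ) (ℓ : ℝ) : volume (cube n c ℓ) ≠ ∞ := by
  simp [volume_cube]

theorem toReal_one_div_add_toReal_one_div {r : ℝ} (hr : 0 < r) {β u : ℝ≥0∞}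
    (hu : 1 / ENNReal.ofReal r = 1 / β + 1 / u) :
    (1 / β).toReal + (1 / u).toReal = 1 / r := by
  have hrinv : 1 / ENNReal.ofReal r = ENNReal.ofReal (1 / r) := by
    rw [one_div, one_div, ← ENNReal.ofReal_inv_of_pos hr]
  rw [hrinv] at hu
  have hβ : 1 / β ≠ ∞ := fun h => by simp [h] at hu
  have hu' : 1 / u ≠ ∞ := fun h => by simp [h] at hu
  rw [← ENNReal.toReal_add hβ hu', ← hu, ENNReal.toReal_ofReal (by positivity)]

theorem rpow_mul_inv_rpow_mul_rpow_of_add_eq {a : ℝ≥0∞} (ha0 : a ≠ 0) (hatop : a ≠ ∞)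
    {x y z : ℝ} (hxyz : x + y = z) :
    a ^ x * (a ^ z)⁻¹ * a ^ y = 1 := by
  rw [mul_right_comm, ← ENNReal.rpow_add _ _ ha0 hatop, hxyz]
  exact ENNReal.mul_inv_cancel (by simp [ENNReal.rpow_eq_zero_iff, ha0, hatop])
    (by simp [ENNReal.rpow_eq_top_iff, ha0, hatop])

section Weighted

variable {α : Type*} [MeasurableSpace α] {μ : Measure α} {s : Set α} {f ω : α → ℝ}

theorem eLpNorm_indicator_le_mul_eLpNorm_mul_weight {p r t : ℝ≥0∞} [HolderTriple t p r]
    (hs : MeasurableSet s) (hf : AEMeasurable f μ) (hω : AEMeasurable ω μ)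
    (hω0 : ∀ x ∈ s, ω x ≠ 0) :
    eLpNorm (s.indicator f) r μ ≤
      eLpNorm (s.indicator fun x => (ω x)⁻¹) t μ * eLpNorm (fun x => f x * ω x) p μ := by
  have hfactor : s.indicator f =
      (s.indicator fun x => (ω x)⁻¹) • s.indicator fun x => f x * ω x := by
    ext x
    by_cases hx : x ∈ s
    · simp only [Pi.smul_apply', smul_eq_mul, indicator_of_mem hx]
      rw [mul_comm (f x), inv_mul_cancel_left₀ (hω0 x hx)]
    · simp [hx]
  rw [hfactor]
  calc _ ≤ eLpNorm (s.indicator fun x => (ω x)⁻¹) t μ *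
        eLpNorm (s.indicator fun x => f x * ω x) p μ :=
        eLpNorm_smul_le_mul_eLpNorm ((hf.mul hω).indicator hs).aestronglyMeasurable
          (hω.inv.indicator hs).aestronglyMeasurable
    _ ≤ _ := by gcongr; exact eLpNorm_indicator_le _

theorem eLpNorm_average_mul_eLpNorm_weight_le {r : ℝ} (hr : 0 < r) {p q t β u C : ℝ≥0∞}
    (ht : 1 / ENNReal.ofReal r = 1 / p + 1 / t) (hu : 1 / ENNReal.ofReal r = 1 / β + 1 / u)
    (hs : MeasurableSet s) (hs0 : μ s ≠ 0) (hstop : μ s ≠ ∞)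
    (hf : AEMeasurable f μ) (hω : AEMeasurable ω μ) (hω0 : ∀ x ∈ s, ω x ≠ 0)
    (hws : eLpNorm (s.indicator ω) q μ * eLpNorm (s.indicator fun x => (ω x)⁻¹) t μ ≤
      C * μ s ^ (1 / u).toReal) :
    μ s ^ (1 / β).toReal * (μ s ^ (1 / r))⁻¹ * eLpNorm (s.indicator f) (ENNReal.ofReal r) μ *
        eLpNorm (s.indicator ω) q μ ≤
      C * eLpNorm (fun x => f x * ω x) p μ := by
  have : HolderTriple t p (ENNReal.ofReal r) := ⟨by simpa only [one_div, add_comm] using ht.symm⟩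
  set Nq := eLpNorm (s.indicator ω) q μ
  set Nt := eLpNorm (s.indicator fun x => (ω x)⁻¹) t μ
  set Np := eLpNorm (fun x => f x * ω x) p μ
  calc μ s ^ (1 / β).toReal * (μ s ^ (1 / r))⁻¹ * eLpNorm (s.indicator f) (ENNReal.ofReal r) μ * Nq
      ≤ μ s ^ (1 / β).toReal * (μ s ^ (1 / r))⁻¹ * (Nt * Np) * Nq := by
        gcongr
        exact eLpNorm_indicator_le_mul_eLpNorm_mul_weight hs hf hω hω0
    _ = (Nq * Nt) * (μ s ^ (1 / β).toReal * (μ s ^ (1 / r))⁻¹ * Np) := by ring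
    _ ≤ (C * μ s ^ (1 / u).toReal) * (μ s ^ (1 / β).toReal * (μ s ^ (1 / r))⁻¹ * Np) := by
        gcongr
    _ = C * Np * (μ s ^ (1 / β).toReal * (μ s ^ (1 / r))⁻¹ * μ s ^ (1 / u).toReal) := by ring
    _ = C * Np := by
        rw [rpow_mul_inv_rpow_mul_rpow_of_add_eq hs0 hstop
          (toReal_one_div_add_toReal_one_div hr hu), mul_one]

end Weighted

/-- The exponents `pr/(p-r)` and `βr/(β-r)` are encoded as `t` and `u` through
`1/r = 1/p + 1/t` and `1/r = 1/β + 1/u`; the left side of the conclusion is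
`‖(A_{β,r,Q} f) ω‖_q = |Q|^{1/β} |Q|^{-1/r} ‖fχ_Q‖_r ‖ωχ_Q‖_q`. -/
theorem stmt15_general (n : ℕ) (r p : ℝ) (hr : 1 ≤ r)
    (β q t u : ℝ≥0∞)
    (ht : 1 / ENNReal.ofReal r = 1 / ENNReal.ofReal p + 1 / t)
    (hu : 1 / ENNReal.ofReal r = 1 / β + 1 / u)
    (ω : (Fin n → ℝ) → ℝ) (hω : Measurable ω) (hωpos : ∀ x, 0 < ω x)
    (C0 : ℝ)
    (hw : ∀ (c : Fin n → ℝ) (ℓ : ℝ), 0 < ℓ →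
      eLpNorm ((cube n c ℓ).indicator ω) q volume *
        eLpNorm ((cube n c ℓ).indicator fun x => (ω x)⁻¹) t volume ≤
      ENNReal.ofReal C0 * volume (cube n c ℓ) ^ (1 / u).toReal) :
    ∃ C : ℝ, ∀ (c : Fin n → ℝ) (ℓ : ℝ), 0 < ℓ →
      ∀ f : (Fin n → ℝ) → ℝ, Measurable f →
        volume (cube n c ℓ) ^ (1 / β).toReal *
          (volume (cube n c ℓ) ^ (1 / r))⁻¹ *
          eLpNorm ((cube n c ℓ).indicator f) (ENNReal.ofReal r) volume *
          eLpNorm ((cube n c ℓ).indicator ω) q volume ≤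
        ENNReal.ofReal C * eLpNorm (fun x => f x * ω x) (ENNReal.ofReal p) volume :=
  ⟨C0, fun c ℓ hℓ f hf =>
    eLpNorm_average_mul_eLpNorm_weight_le (by linarith) ht hu (measurableSet_cube n c ℓ)
      (volume_cube_ne_zero n c hℓ) (volume_cube_ne_top n c ℓ) hf.aemeasurable hω.aemeasurable
      (fun x _ => (hωpos x).ne') (hw c ℓ hℓ)⟩

/-- Constant-exponent case of Proposition 3.2(2) (sufficiency).
Exponents: `1 ≤ r ≤ p ≤ β ≤ ∞` with `1/p = 1/q + 1/β`; `t = pr/(p-r)` is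
encoded by `1/r = 1/p + 1/t` and `u = βr/(β-r)` by `1/r = 1/β + 1/u`.
If `‖ωχ_Q‖_q ‖ω⁻¹χ_Q‖_t ≤ C₀ |Q|^{1/u}` uniformly over cubes, then
`‖(A_{β,r,Q} f) ω‖_q ≤ C ‖fω‖_p` uniformly over cubes `Q` and functions `f`,
where `A_{β,r,Q} f = χ_Q |Q|^{1/β} |Q|^{-1/r} ‖fχ_Q‖_r`, so that
`‖(A_{β,r,Q} f) ω‖_q = |Q|^{1/β} |Q|^{-1/r} ‖fχ_Q‖_r ‖ωχ_Q‖_q`. -/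
theorem stmt15 (n : ℕ) (r p : ℝ) (hr : 1 ≤ r) (hrp : r ≤ p)
    (β q t u : ℝ≥0∞)
    (hpβ : ENNReal.ofReal p ≤ β)
    (hpq : 1 / ENNReal.ofReal p = 1 / q + 1 / β)
    (ht : 1 / ENNReal.ofReal r = 1 / ENNReal.ofReal p + 1 / t)
    (hu : 1 / ENNReal.ofReal r = 1 / β + 1 / u)
    (ω : (Fin n → ℝ) → ℝ) (hω : Measurable ω) (hωpos : ∀ x, 0 < ω x)
    (C0 : ℝ)
    (hw : ∀ (c : Fin n → ℝ) (ℓ : ℝ), 0 < ℓ →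
      eLpNorm ((cube n c ℓ).indicator ω) q volume *
        eLpNorm ((cube n c ℓ).indicator fun x => (ω x)⁻¹) t volume ≤
      ENNReal.ofReal C0 * volume (cube n c ℓ) ^ (1 / u).toReal) :
    ∃ C : ℝ, ∀ (c : Fin n → ℝ) (ℓ : ℝ), 0 < ℓ →
      ∀ f : (Fin n → ℝ) → ℝ, Measurable f →
        volume (cube n c ℓ) ^ (1 / β).toReal *
          (volume (cube n c ℓ) ^ (1 / r))⁻¹ *
          eLpNorm ((cube n c ℓ).indicator f) (ENNReal.ofReal r) volume *
          eLpNorm ((cube n c ℓ).indicator ω) q volume ≤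
        ENNReal.ofReal C * eLpNorm (fun x => f x * ω x) (ENNReal.ofReal p) volume :=
  stmt15_general n r p hr β q t u ht hu ω hω hωpos C0 hw
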